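/- Let A and B be arbitrary n×n complex matrices and let Q = (I − A*B)(I + B*B)^{−1}(I − A*B)*. Then for any indices 1 ≤ i_1 < i_2 < ... < i_k ≤ n, ∏_{t=1}^k λ_{i_t}(Q) ≥ ∏_{t=1}^k σ_{i_t}(I − A*B)^2 / (1 + λ_t(B*B)). -/

import Mathlib

open Matrix
open scoped ComplexOrder

/-- The `t`-th largest eigenvalue (0-indexed) of a Hermitian matrix
(junk value `0` if the matrix is not Hermitian). -/
noncomputable def eigval {n : ℕ} (A : Matrix (Fin n) (Fin n) ℂ) (t : Fin n) : ℝ :=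
  if h : A.IsHermitian then h.eigenvalues (Tuple.sort h.eigenvalues t.rev) else 0

/-- The `t`-th largest singular value (0-indexed) of a square complex matrix. -/
noncomputable def singval {n : ℕ} (X : Matrix (Fin n) (Fin n) ℂ) (t : Fin n) : ℝ :=
  Real.sqrt (eigval (Xᴴ * X) t)

/-!
Write `X = 1 - Aᴴ * B` and `(1 + Bᴴ * B)⁻¹ = Uᴴ * diagonal p * U` with `U` unitary and
`p j = 1 / λ_j(1 + Bᴴ * B)` increasing, so that `Q` has the eigenvalues of `R * G * R` where
`G = U * Xᴴ * X * Uᴴ` and `R = diagonal (√p)`.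

For positive definite `G` and a positive diagonal `D` with `D ^ 2 ≤ d`, Courant–Fischer gives
`λ_j(D G D) ≤ d λ_j(G)` for every `j`, while `det (D G D) = det D ^ 2 * det G`; dividing out the
indices outside `{i_t}` leaves `∏ λ_{i_t}(D G D) ≥ det D ^ 2 / d ^ (n - k) * ∏ λ_{i_t}(G)`.
Truncating `R` at `d = p_k` makes `det D ^ 2 / d ^ (n - k) = p_1 ⋯ p_k` and only lowers the
eigenvalues; positive semidefinite `G` follows by perturbing to `G + ε`. Finally
`λ_t(1 + Bᴴ * B) ≤ 1 + λ_t(Bᴴ * B)`.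
-/

namespace ProdEig

open Module Finset

variable {n : ℕ}

noncomputable def sqNorm (x : Fin n → ℂ) : ℝ := (star x ⬝ᵥ x).re

noncomputable def quadForm (A : Matrix (Fin n) (Fin n) ℂ) (x : Fin n → ℂ) : ℝ :=
  (star x ⬝ᵥ (A *ᵥ x)).re

lemma sqNorm_eq_sum (x : Fin n → ℂ) : sqNorm x = ∑ l, Complex.normSq (x l) := by
  simp [sqNorm, dotProduct, Complex.re_sum, Complex.normSq_apply, mul_comm]

lemma sqNorm_pos {x : Fin n → ℂ} (hx : x ≠ 0) : 0 < sqNorm x := by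
  obtain ⟨l, hl⟩ := Function.ne_iff.mp hx
  rw [sqNorm_eq_sum]
  exact sum_pos' (fun l _ => Complex.normSq_nonneg _) ⟨l, mem_univ _, Complex.normSq_pos.mpr hl⟩

lemma quadForm_add (A B : Matrix (Fin n) (Fin n) ℂ) (x : Fin n → ℂ) :
    quadForm (A + B) x = quadForm A x + quadForm B x := by
  simp [quadForm, add_mulVec, dotProduct_add]

lemma quadForm_smul_one (c : ℝ) (x : Fin n → ℂ) :
    quadForm ((c : ℂ) • 1) x = c * sqNorm x := by
  simp [quadForm, sqNorm, smul_mulVec, dotProduct_smul]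

lemma quadForm_one (x : Fin n → ℂ) : quadForm 1 x = sqNorm x := by
  simp [quadForm, sqNorm]

lemma quadForm_conjTranspose_mul_mul (A C : Matrix (Fin n) (Fin n) ℂ) (x : Fin n → ℂ) :
    quadForm (Cᴴ * A * C) x = quadForm A (C *ᵥ x) := by
  simp only [quadForm, ← mulVec_mulVec, dotProduct_mulVec, vecMul_conjTranspose, star_star]

lemma quadForm_conjTranspose_mul_self (C : Matrix (Fin n) (Fin n) ℂ) (x : Fin n → ℂ) :
    quadForm (Cᴴ * C) x = sqNorm (C *ᵥ x) := by
  simpa [quadForm_one] using quadForm_conjTranspose_mul_mul 1 C x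

lemma quadForm_conjTranspose_mul_diagonal_mul (U : Matrix (Fin n) (Fin n) ℂ) (f : Fin n → ℝ)
    (x : Fin n → ℂ) :
    quadForm (Uᴴ * diagonal (fun l => (f l : ℂ)) * U) x
      = ∑ l, f l * Complex.normSq ((U *ᵥ x) l) := by
  rw [quadForm_conjTranspose_mul_mul]
  simp only [quadForm, dotProduct, mulVec_diagonal, Complex.re_sum]
  refine sum_congr rfl fun l _ => ?_
  simp [Complex.normSq_apply]
  ring

lemma sqNorm_unitary_mulVec {U : Matrix (Fin n) (Fin n) ℂ}
    (hU : U ∈ unitaryGroup (Fin n) ℂ) (x : Fin n → ℂ) : sqNorm (U *ᵥ x) = sqNorm x := by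
  rw [← quadForm_conjTranspose_mul_self, ← star_eq_conjTranspose, mem_unitaryGroup_iff'.mp hU,
    quadForm_one]

lemma exists_ne_zero_mem_of_finrank_lt {K V : Type*} [DivisionRing K] [AddCommGroup V]
    [Module K V] [FiniteDimensional K V] {s t : Submodule K V}
    (h : finrank K V < finrank K s + finrank K t) :
    ∃ x ∈ s, x ∈ t ∧ x ≠ 0 := by
  by_contra! hst
  exact h.not_ge <| Submodule.finrank_add_finrank_le_of_disjoint <|
    Submodule.disjoint_def.mpr hst

noncomputable def vanishingOn (M : Matrix (Fin n) (Fin n) ℂ) (s : Finset (Fin n)) :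
    Submodule ℂ (Fin n → ℂ) :=
  LinearMap.ker (LinearMap.pi (fun l : s => LinearMap.proj (l : Fin n)) ∘ₗ M.mulVecLin)

lemma mem_vanishingOn {M : Matrix (Fin n) (Fin n) ℂ} {s : Finset (Fin n)} {x : Fin n → ℂ} :
    x ∈ vanishingOn M s ↔ ∀ l ∈ s, (M *ᵥ x) l = 0 := by
  simp [vanishingOn, funext_iff]

lemma le_finrank_vanishingOn_add_card (M : Matrix (Fin n) (Fin n) ℂ) (s : Finset (Fin n)) :
    n ≤ finrank ℂ (vanishingOn M s) + s.card := by
  let g := LinearMap.pi (fun l : s => LinearMap.proj (l : Fin n)) ∘ₗ M.mulVecLin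
  have hrange : finrank ℂ (LinearMap.range g) ≤ s.card := by
    simpa using Submodule.finrank_le (LinearMap.range g)
  have := LinearMap.finrank_range_add_finrank_ker g
  simp only [finrank_fintype_fun_eq_card, Fintype.card_fin] at this
  change n ≤ finrank ℂ (LinearMap.ker g) + s.card
  omega

lemma exists_unitary_eq_diagonal_eigval {A : Matrix (Fin n) (Fin n) ℂ} (hA : A.IsHermitian) :
    ∃ U ∈ unitaryGroup (Fin n) ℂ, A = Uᴴ * diagonal (fun j => (eigval A j : ℂ)) * U := by
  set V : Matrix (Fin n) (Fin n) ℂ := (hA.eigenvectorUnitary : Matrix (Fin n) (Fin n) ℂ)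
  set e : Equiv.Perm (Fin n) := Fin.revPerm.trans (Tuple.sort hA.eigenvalues)
  have hV : V * star V = 1 := mem_unitaryGroup_iff.mp hA.eigenvectorUnitary.2
  have heig : (fun j => (eigval A j : ℂ)) = (RCLike.ofReal ∘ hA.eigenvalues) ∘ e := by
    ext j; simp [eigval, hA, e]
  refine ⟨(star V).submatrix e id, ?_, ?_⟩
  · rw [mem_unitaryGroup_iff', star_eq_conjTranspose, conjTranspose_submatrix,
      submatrix_mul_equiv, ← star_eq_conjTranspose, star_star, hV, submatrix_id_id]
  · rw [conjTranspose_submatrix, heig, ← submatrix_diagonal_equiv, submatrix_mul_equiv,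
      submatrix_mul_equiv, submatrix_id_id, ← star_eq_conjTranspose, star_star]
    exact hA.spectral_theorem

section Eigval

variable {A B : Matrix (Fin n) (Fin n) ℂ}

lemma eigval_antitone (hA : A.IsHermitian) : Antitone (eigval A) := by
  intro j l hjl
  simp only [eigval, dif_pos hA]
  exact Tuple.monotone_sort hA.eigenvalues (Fin.rev_le_rev.mpr hjl)

lemma eigval_nonneg (hA : A.PosSemidef) (j : Fin n) : 0 ≤ eigval A j := by
  simpa [eigval, hA.1] using hA.eigenvalues_nonneg _

lemma eigval_pos (hA : A.PosDef) (j : Fin n) : 0 < eigval A j := by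
  simpa [eigval, hA.1] using hA.eigenvalues_pos _

lemma prod_eigval_eq_det (hA : A.IsHermitian) : ∏ j, (eigval A j : ℂ) = A.det := by
  rw [hA.det_eq_prod_eigenvalues]
  simp only [eigval, dif_pos hA]
  exact Equiv.prod_comp (Fin.revPerm.trans (Tuple.sort hA.eigenvalues))
    (fun j => (hA.eigenvalues j : ℂ))

lemma eigval_eq_of_charpoly_eq (hA : A.IsHermitian) (hB : B.IsHermitian)
    (h : A.charpoly = B.charpoly) : eigval A = eigval B := by
  have := (hA.eigenvalues_eq_eigenvalues_iff hB).mpr h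
  ext j
  simp only [eigval, dif_pos hA, dif_pos hB, this]

lemma eigval_conjTranspose_mul_self_comm (Y : Matrix (Fin n) (Fin n) ℂ) :
    eigval (Yᴴ * Y) = eigval (Y * Yᴴ) :=
  eigval_eq_of_charpoly_eq (isHermitian_conjTranspose_mul_self Y)
    (isHermitian_mul_conjTranspose_self Y) (charpoly_mul_comm _ _)

lemma eigval_unitary_conj (hA : A.IsHermitian) {U : Matrix (Fin n) (Fin n) ℂ}
    (hU : U ∈ unitaryGroup (Fin n) ℂ) : eigval (Uᴴ * A * U) = eigval A := by
  refine eigval_eq_of_charpoly_eq (isHermitian_conjTranspose_mul_mul U hA) hA ?_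
  rw [Matrix.mul_assoc, charpoly_mul_comm, Matrix.mul_assoc, ← star_eq_conjTranspose,
    mem_unitaryGroup_iff.mp hU, Matrix.mul_one]

end Eigval

section CourantFischer

variable {A B H : Matrix (Fin n) (Fin n) ℂ}

lemma exists_forall_quadForm_le_eigval_mul (hA : A.IsHermitian) (j : Fin n) :
    ∃ M : Matrix (Fin n) (Fin n) ℂ,
      ∀ x ∈ vanishingOn M (Iio j), quadForm A x ≤ eigval A j * sqNorm x := by
  obtain ⟨U, hU, hAU⟩ := exists_unitary_eq_diagonal_eigval hA
  refine ⟨U, fun x hx => ?_⟩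
  conv_lhs => rw [hAU]
  rw [quadForm_conjTranspose_mul_diagonal_mul, ← sqNorm_unitary_mulVec hU, sqNorm_eq_sum,
    mul_sum]
  refine sum_le_sum fun l _ => ?_
  rcases lt_or_ge l j with hl | hl
  · simp [mem_vanishingOn.mp hx l (mem_Iio.mpr hl)]
  · exact mul_le_mul_of_nonneg_right (eigval_antitone hA hl) (Complex.normSq_nonneg _)

lemma exists_forall_eigval_mul_le_quadForm (hA : A.IsHermitian) (j : Fin n) :
    ∃ M : Matrix (Fin n) (Fin n) ℂ,
      ∀ x ∈ vanishingOn M (Ioi j), eigval A j * sqNorm x ≤ quadForm A x := by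
  obtain ⟨U, hU, hAU⟩ := exists_unitary_eq_diagonal_eigval hA
  refine ⟨U, fun x hx => ?_⟩
  conv_rhs => rw [hAU]
  rw [quadForm_conjTranspose_mul_diagonal_mul, ← sqNorm_unitary_mulVec hU, sqNorm_eq_sum,
    mul_sum]
  refine sum_le_sum fun l _ => ?_
  rcases le_or_gt l j with hl | hl
  · exact mul_le_mul_of_nonneg_right (eigval_antitone hA hl) (Complex.normSq_nonneg _)
  · simp [mem_vanishingOn.mp hx l (mem_Ioi.mpr hl)]

lemma eigval_le_of_forall_quadForm_le (hA : A.IsHermitian) {j : Fin n}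
    {V : Submodule ℂ (Fin n → ℂ)} (hV : n ≤ j + finrank ℂ V) {b : ℝ}
    (hb : ∀ x ∈ V, quadForm A x ≤ b * sqNorm x) : eigval A j ≤ b := by
  obtain ⟨M, hM⟩ := exists_forall_eigval_mul_le_quadForm hA j
  have hdim := le_finrank_vanishingOn_add_card M (Ioi j)
  rw [Fin.card_Ioi] at hdim
  obtain ⟨x, hxV, hxM, hx⟩ :=
    exists_ne_zero_mem_of_finrank_lt (s := V) (t := vanishingOn M (Ioi j)) (by
      rw [finrank_fintype_fun_eq_card, Fintype.card_fin]; omega)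
  exact le_of_mul_le_mul_right ((hM x hxM).trans (hb x hxV)) (sqNorm_pos hx)

lemma eigval_le_eigval_add (hA : A.IsHermitian) (hB : B.IsHermitian) {t : ℝ}
    (h : ∀ x, quadForm A x ≤ quadForm B x + t * sqNorm x) (j : Fin n) :
    eigval A j ≤ eigval B j + t := by
  obtain ⟨M, hM⟩ := exists_forall_quadForm_le_eigval_mul hB j
  refine eigval_le_of_forall_quadForm_le hA (V := vanishingOn M (Iio j)) ?_ fun x hx => ?_
  · simpa [add_comm] using le_finrank_vanishingOn_add_card M (Iio j)
  · linarith [h x, hM x hx]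

lemma eigval_conjTranspose_mul_mul_le (hH : H.PosSemidef) {C : Matrix (Fin n) (Fin n) ℂ}
    {s : ℝ} (hC : ∀ x, sqNorm (C *ᵥ x) ≤ s * sqNorm x) (j : Fin n) :
    eigval (Cᴴ * H * C) j ≤ s * eigval H j := by
  obtain ⟨M, hM⟩ := exists_forall_quadForm_le_eigval_mul hH.1 j
  refine eigval_le_of_forall_quadForm_le (isHermitian_conjTranspose_mul_mul C hH.1)
    (V := vanishingOn (M * C) (Iio j)) ?_ fun x hx => ?_
  · simpa [add_comm] using le_finrank_vanishingOn_add_card (M * C) (Iio j)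
  have hCx : C *ᵥ x ∈ vanishingOn M (Iio j) := by
    rw [mem_vanishingOn] at hx ⊢
    simpa only [mulVec_mulVec] using hx
  calc quadForm (Cᴴ * H * C) x = quadForm H (C *ᵥ x) := quadForm_conjTranspose_mul_mul H C x
    _ ≤ eigval H j * sqNorm (C *ᵥ x) := hM _ hCx
    _ ≤ eigval H j * (s * sqNorm x) := mul_le_mul_of_nonneg_left (hC x) (eigval_nonneg hH j)
    _ = s * eigval H j * sqNorm x := by ring

end CourantFischer

lemma mul_prod_le_pow_card_compl_mul_prod {ι : Type*} [Fintype ι] [DecidableEq ι] {a b : ι → ℝ}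
    {K C : ℝ} (s : Finset ι) (ha : ∀ i, 0 < a i) (hb : ∀ i, 0 ≤ b i) (hK : 0 ≤ K)
    (hab : ∀ i ∉ s, a i ≤ C * b i) (hprod : ∏ i, a i = K * ∏ i, b i) :
    K * ∏ i ∈ s, b i ≤ C ^ sᶜ.card * ∏ i ∈ s, a i := by
  refine le_of_mul_le_mul_right ?_ (prod_pos fun i _ => ha i : 0 < ∏ i ∈ sᶜ, a i)
  calc (K * ∏ i ∈ s, b i) * ∏ i ∈ sᶜ, a i ≤ (K * ∏ i ∈ s, b i) * ∏ i ∈ sᶜ, (C * b i) :=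
        mul_le_mul_of_nonneg_left
          (prod_le_prod (fun i _ => (ha i).le) fun i hi => hab i (mem_compl.mp hi))
          (mul_nonneg hK (prod_nonneg fun i _ => hb i))
    _ = C ^ sᶜ.card * (K * ∏ i, b i) := by
        rw [prod_mul_distrib, prod_const, ← prod_mul_prod_compl s b]; ring
    _ = (C ^ sᶜ.card * ∏ i ∈ s, a i) * ∏ i ∈ sᶜ, a i := by
        rw [← hprod, ← prod_mul_prod_compl s a]; ring

lemma prod_min_eq_pow_mul_prod_castLE {p : Fin n → ℝ} (hp : Monotone p) {k : ℕ} (hk : 0 < k)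
    (hkn : k ≤ n) :
    ∏ j, min (p ⟨k - 1, by omega⟩) (p j)
      = p ⟨k - 1, by omega⟩ ^ (n - k) * ∏ t : Fin k, p (Fin.castLE hkn t) := by
  set S := univ.map (Fin.castLEEmb hkn)
  have hS : ∀ j, j ∈ S ↔ (j : ℕ) < k := fun j => by
    simp only [S, mem_map, mem_univ, true_and, Fin.castLEEmb_apply]
    exact ⟨fun ⟨t, ht⟩ => ht ▸ t.isLt, fun hj => ⟨⟨j, hj⟩, rfl⟩⟩
  rw [← prod_mul_prod_compl S, mul_comm]
  congr 1
  · rw [prod_congr rfl fun j hj => min_eq_left (hp ?_), prod_const, card_compl, card_map,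
      card_univ, Fintype.card_fin, Fintype.card_fin]
    rw [mem_compl, hS] at hj
    exact Fin.mk_le_of_le_val (by omega)
  · rw [prod_map]
    refine prod_congr rfl fun t _ => min_eq_right (hp ?_)
    exact Fin.le_def.mpr (by simp; omega)

section DiagonalCongruence

variable {G H : Matrix (Fin n) (Fin n) ℂ}

lemma sqNorm_diagonal_mulVec_le {q : Fin n → ℝ} {d : ℝ} (hqd : ∀ j, q j ^ 2 ≤ d)
    (x : Fin n → ℂ) : sqNorm (diagonal (fun j => (q j : ℂ)) *ᵥ x) ≤ d * sqNorm x := by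
  rw [sqNorm_eq_sum, sqNorm_eq_sum, mul_sum]
  refine sum_le_sum fun j _ => ?_
  rw [mulVec_diagonal, Complex.normSq_mul, Complex.normSq_ofReal, ← sq]
  exact mul_le_mul_of_nonneg_right (hqd j) (Complex.normSq_nonneg _)

lemma prod_sq_mul_prod_eigval_le_of_posDef (hH : H.PosDef) {q : Fin n → ℝ} (hq : ∀ j, 0 < q j)
    {d : ℝ} (hqd : ∀ j, q j ^ 2 ≤ d) (s : Finset (Fin n)) :
    (∏ j, q j ^ 2) * ∏ j ∈ s, eigval H j
      ≤ d ^ sᶜ.card * ∏ j ∈ s, eigval ((diagonal fun j => (q j : ℂ))ᴴ * H *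
        diagonal fun j => (q j : ℂ)) j := by
  set D := diagonal fun j => (q j : ℂ)
  have hD : Function.Injective D.mulVec := fun x y hxy => funext fun j => by
    simpa [D, mulVec_diagonal, (hq j).ne'] using congrFun hxy j
  have hDHD : (Dᴴ * H * D).PosDef := hH.conjTranspose_mul_mul_same hD
  refine mul_prod_le_pow_card_compl_mul_prod s (eigval_pos hDHD) (eigval_nonneg hH.posSemidef)
    (prod_nonneg fun j _ => sq_nonneg _)
    (fun j _ => eigval_conjTranspose_mul_mul_le hH.posSemidef (sqNorm_diagonal_mulVec_le hqd) j)
    ?_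
  have hdet := prod_eigval_eq_det hDHD.1
  rw [det_mul, det_mul, det_conjTranspose, ← prod_eigval_eq_det hH.1] at hdet
  have hDdet : D.det = ∏ j, (q j : ℂ) := det_diagonal
  rw [hDdet, star_prod] at hdet
  simp only [Complex.star_def, Complex.conj_ofReal] at hdet
  have : ((∏ j, eigval (Dᴴ * H * D) j : ℝ) : ℂ) = ((∏ j, q j ^ 2) * ∏ j, eigval H j : ℝ) := by
    push_cast
    rw [hdet, prod_pow]
    ring
  exact_mod_cast this

lemma prod_sq_mul_prod_eigval_le_of_posSemidef (hG : G.PosSemidef) {q : Fin n → ℝ}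
    (hq : ∀ j, 0 < q j) {d : ℝ} (hqd : ∀ j, q j ^ 2 ≤ d) (s : Finset (Fin n)) :
    (∏ j, q j ^ 2) * ∏ j ∈ s, eigval G j
      ≤ d ^ sᶜ.card * ∏ j ∈ s, eigval ((diagonal fun j => (q j : ℂ))ᴴ * G *
        diagonal fun j => (q j : ℂ)) j := by
  set D := diagonal fun j => (q j : ℂ)
  have hGD : (Dᴴ * G * D).IsHermitian := isHermitian_conjTranspose_mul_mul D hG.1
  -- Perturb `G` to the positive definite `G + ε • 1` and let `ε → 0`.
  have hε : ∀ ε > 0, (∏ j, q j ^ 2) * ∏ j ∈ s, (eigval G j + ε)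
      ≤ d ^ sᶜ.card * ∏ j ∈ s, (eigval (Dᴴ * G * D) j + d * ε) := by
    intro ε hε
    have hGε : (G + (ε : ℂ) • 1).PosDef :=
      PosDef.posSemidef_add hG (PosDef.one.smul (Complex.zero_lt_real.mpr hε))
    have hGεD : (Dᴴ * (G + (ε : ℂ) • 1) * D).PosSemidef :=
      hGε.posSemidef.conjTranspose_mul_mul_same D
    calc (∏ j, q j ^ 2) * ∏ j ∈ s, (eigval G j + ε)
        ≤ (∏ j, q j ^ 2) * ∏ j ∈ s, eigval (G + (ε : ℂ) • 1) j := by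
          refine mul_le_mul_of_nonneg_left (prod_le_prod (fun j _ => ?_) fun j _ => ?_)
            (prod_nonneg fun j _ => sq_nonneg _)
          · linarith [eigval_nonneg hG j]
          · have := eigval_le_eigval_add hG.1 hGε.1 (t := -ε) (fun x => by
              rw [quadForm_add, quadForm_smul_one]; linarith) j
            linarith
      _ ≤ d ^ sᶜ.card * ∏ j ∈ s, eigval (Dᴴ * (G + (ε : ℂ) • 1) * D) j :=
          prod_sq_mul_prod_eigval_le_of_posDef hGε hq hqd s
      _ ≤ d ^ sᶜ.card * ∏ j ∈ s, (eigval (Dᴴ * G * D) j + d * ε) := by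
          refine mul_le_mul_of_nonneg_left (prod_le_prod (fun j _ => eigval_nonneg hGεD j)
            fun j _ => eigval_le_eigval_add hGεD.1 hGD (fun x => ?_) j) ?_
          · rw [quadForm_conjTranspose_mul_mul, quadForm_add, quadForm_smul_one,
              quadForm_conjTranspose_mul_mul]
            nlinarith [sqNorm_diagonal_mulVec_le hqd x]
          · rw [← prod_const]
            exact prod_nonneg fun j _ => (sq_nonneg _).trans (hqd j)
  have hl : Continuous fun ε : ℝ => (∏ j, q j ^ 2) * ∏ j ∈ s, (eigval G j + ε) := by fun_prop
  have hr : Continuous fun ε : ℝ => d ^ sᶜ.card * ∏ j ∈ s, (eigval (Dᴴ * G * D) j + d * ε) := by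
    fun_prop
  simpa using le_of_tendsto_of_tendsto ((hl.tendsto 0).mono_left nhdsWithin_le_nhds)
    ((hr.tendsto 0).mono_left nhdsWithin_le_nhds)
    (eventually_nhdsWithin_of_forall (s := Set.Ioi 0) hε)

lemma eigval_diagonal_conj_le_of_le (hG : G.PosSemidef) {q r : Fin n → ℝ} (hq : ∀ j, 0 ≤ q j)
    (hqr : ∀ j, q j ≤ r j) (j : Fin n) :
    eigval ((diagonal fun j => (q j : ℂ))ᴴ * G * diagonal fun j => (q j : ℂ)) j
      ≤ eigval ((diagonal fun j => (r j : ℂ))ᴴ * G * diagonal fun j => (r j : ℂ)) j := by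
  set g : Fin n → ℝ := fun j => q j / r j
  have hrg : (diagonal fun j => (q j : ℂ))
      = (diagonal fun j => (r j : ℂ)) * diagonal fun j => (g j : ℂ) := by
    rw [diagonal_mul_diagonal]
    congr 1
    ext j
    rcases ((hq j).trans (hqr j)).eq_or_lt with hr | hr
    · simp [g, ← hr, le_antisymm (hr ▸ hqr j) (hq j)]
    · simp only [g, Complex.ofReal_div]
      field_simp [Complex.ofReal_ne_zero.mpr hr.ne']
  have hg : ∀ j, g j ^ 2 ≤ 1 := fun j => by
    have h0 : 0 ≤ g j := div_nonneg (hq j) ((hq j).trans (hqr j))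
    have h1 : g j ≤ 1 := div_le_one_of_le₀ (hqr j) ((hq j).trans (hqr j))
    nlinarith
  rw [hrg, conjTranspose_mul]
  simpa only [Matrix.mul_assoc, one_mul] using eigval_conjTranspose_mul_mul_le
    (hG.conjTranspose_mul_mul_same _) (sqNorm_diagonal_mulVec_le hg) j

end DiagonalCongruence

theorem prod_castLE_mul_prod_eigval_le {G : Matrix (Fin n) (Fin n) ℂ} (hG : G.PosSemidef)
    {p : Fin n → ℝ} (hp : ∀ j, 0 < p j) (hpm : Monotone p) {k : ℕ} (hk : 0 < k) (hkn : k ≤ n)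
    {s : Finset (Fin n)} (hs : s.card = k) :
    (∏ t : Fin k, p (Fin.castLE hkn t)) * ∏ j ∈ s, eigval G j
      ≤ ∏ j ∈ s, eigval ((diagonal fun j => (√(p j) : ℂ))ᴴ * G *
        diagonal fun j => (√(p j) : ℂ)) j := by
  set d := p ⟨k - 1, by omega⟩
  have hd : 0 < d := hp _
  -- Truncating `p` at its `k`-th smallest value `d` gives `∏ j, q j ^ 2 = d ^ (n - k) * ∏ p`
  -- over the first `k` indices, with `q ^ 2 ≤ d` and `q ≤ √p`.
  set q : Fin n → ℝ := fun j => √(min d (p j))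
  have hq2 : ∀ j, q j ^ 2 = min d (p j) := fun j => Real.sq_sqrt (le_min hd.le (hp j).le)
  have hsc : sᶜ.card = n - k := by rw [card_compl, Fintype.card_fin, hs]
  refine le_of_mul_le_mul_left ?_ (pow_pos hd (n - k))
  calc d ^ (n - k) * ((∏ t : Fin k, p (Fin.castLE hkn t)) * ∏ j ∈ s, eigval G j)
      = (∏ j, q j ^ 2) * ∏ j ∈ s, eigval G j := by
        simp only [hq2, prod_min_eq_pow_mul_prod_castLE hpm hk hkn, d]
        ring
    _ ≤ d ^ (n - k) * ∏ j ∈ s, eigval ((diagonal fun j => (q j : ℂ))ᴴ * G *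
          diagonal fun j => (q j : ℂ)) j := by
        simpa only [hsc] using prod_sq_mul_prod_eigval_le_of_posSemidef hG
          (fun j => Real.sqrt_pos.mpr (lt_min hd (hp j)))
          (fun j => (hq2 j).trans_le (min_le_left _ _)) s
    _ ≤ d ^ (n - k) * ∏ j ∈ s, eigval ((diagonal fun j => (√(p j) : ℂ))ᴴ * G *
          diagonal fun j => (√(p j) : ℂ)) j :=
        mul_le_mul_of_nonneg_left (prod_le_prod
          (fun j _ => eigval_nonneg (hG.conjTranspose_mul_mul_same _) j)
          fun j _ => eigval_diagonal_conj_le_of_le hG (fun j => Real.sqrt_nonneg _)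
            (fun j => Real.sqrt_le_sqrt (min_le_right _ _)) j) (pow_nonneg hd.le _)

lemma inv_conjTranspose_mul_diagonal_mul {U : Matrix (Fin n) (Fin n) ℂ}
    (hU : U ∈ unitaryGroup (Fin n) ℂ) {m : Fin n → ℂ} (hm : ∀ j, m j ≠ 0) :
    (Uᴴ * diagonal m * U)⁻¹ = Uᴴ * diagonal m⁻¹ * U := by
  refine inv_eq_right_inv ?_
  have hUU : U * Uᴴ = 1 := mem_unitaryGroup_iff.mp hU
  have hmm : diagonal m * diagonal m⁻¹ = 1 := by
    rw [diagonal_mul_diagonal, ← diagonal_one]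
    exact congrArg diagonal (funext fun j => mul_inv_cancel₀ (hm j))
  calc Uᴴ * diagonal m * U * (Uᴴ * diagonal m⁻¹ * U)
      = Uᴴ * (diagonal m * (U * Uᴴ) * diagonal m⁻¹) * U := by simp only [Matrix.mul_assoc]
    _ = 1 := by rw [hUU, Matrix.mul_one, hmm, Matrix.mul_one, ← star_eq_conjTranspose,
          mem_unitaryGroup_iff'.mp hU]

theorem prod_castLE_mul_prod_eigval_le_mul_mul_conjTranspose (X : Matrix (Fin n) (Fin n) ℂ)
    {U : Matrix (Fin n) (Fin n) ℂ} (hU : U ∈ unitaryGroup (Fin n) ℂ) {p : Fin n → ℝ}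
    (hp : ∀ j, 0 < p j) (hpm : Monotone p) {k : ℕ} (hk : 0 < k) (hkn : k ≤ n)
    {s : Finset (Fin n)} (hs : s.card = k) :
    (∏ t : Fin k, p (Fin.castLE hkn t)) * ∏ j ∈ s, eigval (Xᴴ * X) j
      ≤ ∏ j ∈ s, eigval (X * (Uᴴ * diagonal (fun j => (p j : ℂ)) * U) * Xᴴ) j := by
  set R := diagonal fun j => (√(p j) : ℂ)
  have hRR : R * Rᴴ = diagonal fun j => (p j : ℂ) := by
    rw [diagonal_conjTranspose, diagonal_mul_diagonal]
    exact congrArg diagonal (funext fun j => by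
      simp [← Complex.ofReal_mul, Real.mul_self_sqrt (hp j).le])
  have hUs : Uᴴ ∈ unitaryGroup (Fin n) ℂ := by
    simpa only [star_eq_conjTranspose] using Unitary.star_mem hU
  have hG := (posSemidef_conjTranspose_mul_self X).conjTranspose_mul_mul_same Uᴴ
  have hXP : X * (Uᴴ * (R * Rᴴ) * U) * Xᴴ = (X * Uᴴ * R) * (X * Uᴴ * R)ᴴ := by
    simp only [conjTranspose_mul, conjTranspose_conjTranspose, Matrix.mul_assoc]
  have hZZ : (X * Uᴴ * R)ᴴ * (X * Uᴴ * R) = Rᴴ * (Uᴴᴴ * (Xᴴ * X) * Uᴴ) * R := by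
    simp only [conjTranspose_mul, Matrix.mul_assoc]
  rw [← hRR, hXP, ← eigval_conjTranspose_mul_self_comm, hZZ,
    ← eigval_unitary_conj (isHermitian_conjTranspose_mul_self X) hUs]
  exact prod_castLE_mul_prod_eigval_le hG hp hpm hk hkn hs

end ProdEig

open ProdEig in
theorem prod_eig_Q_ge_general (n k : ℕ) (hk : 0 < k) (hkn : k ≤ n)
    (A B : Matrix (Fin n) (Fin n) ℂ)
    (Q : Matrix (Fin n) (Fin n) ℂ)
    (hQ : Q = (1 - Aᴴ * B) * (1 + Bᴴ * B)⁻¹ * (1 - Aᴴ * B)ᴴ)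
    (i : Fin k → Fin n) (hi : StrictMono i) :
    ∏ t : Fin k, eigval Q (i t) ≥
      ∏ t : Fin k, singval (1 - Aᴴ * B) (i t) ^ 2 /
        (1 + eigval (Bᴴ * B) (Fin.castLE hkn t)) := by
  set M := 1 + Bᴴ * B
  have hB := posSemidef_conjTranspose_mul_self B
  have hM : M.PosDef := PosDef.one.add_posSemidef hB
  have hMB : ∀ j, eigval M j ≤ eigval (Bᴴ * B) j + 1 :=
    eigval_le_eigval_add hM.1 hB.1 fun x => by rw [quadForm_add, quadForm_one]; linarith
  obtain ⟨U, hU, hMU⟩ := exists_unitary_eq_diagonal_eigval hM.1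
  set p : Fin n → ℝ := fun j => (eigval M j)⁻¹
  have hMinv : M⁻¹ = Uᴴ * diagonal (fun j => (p j : ℂ)) * U := by
    conv_lhs => rw [hMU]
    rw [inv_conjTranspose_mul_diagonal_mul hU fun j =>
      Complex.ofReal_ne_zero.mpr (eigval_pos hM j).ne']
    simp [p, Pi.inv_def]
  have hs : (Finset.univ.image i).card = k := by
    rw [Finset.card_image_of_injective _ hi.injective, Finset.card_fin]
  have key := prod_castLE_mul_prod_eigval_le_mul_mul_conjTranspose (1 - Aᴴ * B) hU
    (fun j => inv_pos.mpr (eigval_pos hM j))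
    (fun a b hab => inv_anti₀ (eigval_pos hM b) (eigval_antitone hM.1 hab)) hk hkn hs
  rw [Finset.prod_image fun a _ b _ h => hi.injective h,
    Finset.prod_image fun a _ b _ h => hi.injective h, ← hMinv, ← hQ,
    ← Finset.prod_mul_distrib] at key
  refine le_trans (Finset.prod_le_prod (fun t _ => ?_) fun t _ => ?_) key
  · exact div_nonneg (sq_nonneg _) (by linarith [eigval_nonneg hB (Fin.castLE hkn t)])
  · have hX := eigval_nonneg (posSemidef_conjTranspose_mul_self (1 - Aᴴ * B)) (i t)
    rw [singval, Real.sq_sqrt hX, mul_comm, ← div_eq_mul_inv]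
    exact div_le_div_of_nonneg_left hX (eigval_pos hM _) (by linarith [hMB (Fin.castLE hkn t)])

theorem prod_eig_Q_ge (n k : ℕ) (hn : 0 < n) (hk : 0 < k) (hkn : k ≤ n)
    (A B : Matrix (Fin n) (Fin n) ℂ)
    (Q : Matrix (Fin n) (Fin n) ℂ)
    (hQ : Q = (1 - Aᴴ * B) * (1 + Bᴴ * B)⁻¹ * (1 - Aᴴ * B)ᴴ)
    (i : Fin k → Fin n) (hi : StrictMono i) :
    ∏ t : Fin k, eigval Q (i t) ≥
      ∏ t : Fin k, singval (1 - Aᴴ * B) (i t) ^ 2 /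
        (1 + eigval (Bᴴ * B) (Fin.castLE hkn t)) :=
  prod_eig_Q_ge_general n k hk hkn A B Q hQ i hi
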